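/- arXiv:1512.08976 — 2 statements merged into one kernel-verified Lean document; each statement's English description precedes it below -/
import Mathlib

section
/- For all p, q ∈ P: (i) if pCq then pq is the infimum p ∧ q of p and q in P; (ii) p ⊥ q ⇔ pq = 0; (iii) if p ⊥ q then p + q is the supremum p ∨ q of p and q in P; (iv) if p ≤ q then q − p ∈ P and q − p is the infimum of (1−p) and q in P; (v) with p ↦ p^⊥ := 1 − p as the orthocomplementation, P is an orthomodular poset. -/
/-- A synaptic algebra: a real vector subspace `carrier` of a unital associative
real algebra `R`, containing `1`, equipped with a positive cone `Pos` making it a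
partially ordered archimedean real vector space with order unit `1`, and
satisfying conditions [SA2]–[SA9]. The partial order is `a ≤ b ↔ b - a ∈ Pos`. -/
structure SynapticAlgebra (R : Type*) [Ring R] [Algebra ℝ R] where
  carrier : Set R
  one_mem : (1 : R) ∈ carrier
  add_mem : ∀ {a b : R}, a ∈ carrier → b ∈ carrier → a + b ∈ carrier
  smul_mem : ∀ (t : ℝ) {a : R}, a ∈ carrier → t • a ∈ carrier
  neg_mem : ∀ {a : R}, a ∈ carrier → -a ∈ carrier
  Pos : Set R
  pos_subset : Pos ⊆ carrier
  pos_add : ∀ {a b : R}, a ∈ Pos → b ∈ Pos → a + b ∈ Pos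
  pos_smul : ∀ {t : ℝ}, 0 ≤ t → ∀ {a : R}, a ∈ Pos → t • a ∈ Pos
  pos_antisymm : ∀ {a : R}, a ∈ Pos → -a ∈ Pos → a = 0
  arch : ∀ {a b : R}, a ∈ carrier → b ∈ carrier →
    (∀ n : ℕ, b - (n : ℝ) • a ∈ Pos) → -a ∈ Pos
  one_pos : (1 : R) ∈ Pos
  orderUnit : ∀ {a : R}, a ∈ carrier → ∃ n : ℕ, (n : ℝ) • (1 : R) - a ∈ Pos
  SA2 : ∀ {a b : R}, a ∈ Pos → b ∈ Pos → a * b = b * a → a * b ∈ Pos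
  SA3 : ∀ {a : R}, a ∈ carrier → a * a ∈ Pos
  SA4 : ∀ {a b : R}, a ∈ Pos → b ∈ Pos → a * b * a ∈ Pos
  SA5 : ∀ {a b : R}, a ∈ carrier → b ∈ Pos → a * b * a = 0 → a * b = 0 ∧ b * a = 0
  SA6 : ∀ {a : R}, a ∈ Pos →
    ∃ b : R, b ∈ Pos ∧ (∀ c ∈ carrier, c * a = a * c → c * b = b * c) ∧ b * b = a
  SA7 : ∀ {a : R}, a ∈ carrier →
    ∃ p : R, p ∈ carrier ∧ p * p = p ∧ ∀ b ∈ carrier, (a * b = 0 ↔ p * b = 0)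
  SA8 : ∀ {a : R}, a ∈ carrier → a - 1 ∈ Pos → ∃ b ∈ carrier, a * b = 1 ∧ b * a = 1
  SA9 : ∀ {a b : R}, a ∈ carrier → b ∈ carrier → ∀ s : ℕ → R,
    (∀ n, s n ∈ carrier) → (∀ n, s (n + 1) - s n ∈ Pos) →
    (∀ m n, s m * s n = s n * s m) → (∀ n, s n * b = b * s n) →
    (∀ ε : ℝ, 0 < ε →
      ∃ N : ℕ, ∀ n ≥ N, (a - s n) - (-ε) • (1 : R) ∈ Pos ∧ ε • (1 : R) - (a - s n) ∈ Pos) →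
    a * b = b * a

namespace SynapticAlgebra

variable {R : Type*} [Ring R] [Algebra ℝ R]

/-- The partial order of the synaptic algebra: `a ≤ b` iff `b - a` is in the positive cone. -/
def le (S : SynapticAlgebra R) (a b : R) : Prop := b - a ∈ S.Pos

/-- The identification of a real number `t` with the element `t·1` of the algebra. -/
def scal (_ : SynapticAlgebra R) (t : ℝ) : R := t • (1 : R)

/-- The order-unit norm: `‖a‖ = inf {t : ℝ | 0 < t ∧ -t·1 ≤ a ≤ t·1}`. -/
noncomputable def nrm (S : SynapticAlgebra R) (a : R) : ℝ :=
  sInf {t : ℝ | 0 < t ∧ S.le (S.scal (-t)) a ∧ S.le a (S.scal t)}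

/-- `p` is a projection: an idempotent element of the algebra. -/
def IsProj (S : SynapticAlgebra R) (p : R) : Prop := p ∈ S.carrier ∧ p * p = p

/-- `e` is an effect: an element with `0 ≤ e ≤ 1`. -/
def IsEff (S : SynapticAlgebra R) (e : R) : Prop := e ∈ S.carrier ∧ S.le 0 e ∧ S.le e 1

/-- `b ∈ CC(a)`: `b` is in the algebra and commutes with every element of the
algebra that commutes with `a` (the double commutant of `a`). -/
def inCC (S : SynapticAlgebra R) (a b : R) : Prop :=
  b ∈ S.carrier ∧ ∀ c ∈ S.carrier, c * a = a * c → c * b = b * c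

/-- The square root of a positive element (chosen via [SA6]; it is unique). -/
noncomputable def sqrt (S : SynapticAlgebra R) (a : R) : R :=
  @dite R (a ∈ S.Pos) (Classical.dec _) (fun h => Classical.choose (S.SA6 h)) (fun _ => 0)

/-- The carrier projection `a°` of `a` (chosen via [SA7]; it is unique):
the projection `p` such that for all `b` in the algebra, `ab = 0 ↔ pb = 0`. -/
noncomputable def carr (S : SynapticAlgebra R) (a : R) : R :=
  @dite R (a ∈ S.carrier) (Classical.dec _) (fun h => Classical.choose (S.SA7 h)) (fun _ => 0)

/-- Absolute value: `|a| := (a²)^{1/2}`. -/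
noncomputable def abs (S : SynapticAlgebra R) (a : R) : R := S.sqrt (a * a)

/-- Positive part: `a⁺ := ½(|a| + a)`. -/
noncomputable def posPart (S : SynapticAlgebra R) (a : R) : R := (1/2 : ℝ) • (S.abs a + a)

/-- Negative part: `a⁻ := ½(|a| − a)`. -/
noncomputable def negPart (S : SynapticAlgebra R) (a : R) : R := (1/2 : ℝ) • (S.abs a - a)

/-- Signum: `sgn(a) := (a⁺)° − (a⁻)°`. -/
noncomputable def sgn (S : SynapticAlgebra R) (a : R) : R :=
  S.carr (S.posPart a) - S.carr (S.negPart a)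

/-- The Sasaki mapping: `φ_a(b) := (aba)°`. -/
noncomputable def sas (S : SynapticAlgebra R) (a b : R) : R := S.carr (a * b * a)

/-- `m` is the infimum of the projections `p` and `q` in the poset `P` of projections. -/
def IsMeet (S : SynapticAlgebra R) (p q m : R) : Prop :=
  S.IsProj m ∧ S.le m p ∧ S.le m q ∧ ∀ r, S.IsProj r → S.le r p → S.le r q → S.le r m

/-- `j` is the supremum of the projections `p` and `q` in the poset `P` of projections. -/
def IsJoin (S : SynapticAlgebra R) (p q j : R) : Prop :=
  S.IsProj j ∧ S.le p j ∧ S.le q j ∧ ∀ r, S.IsProj r → S.le p r → S.le q r → S.le j r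

end SynapticAlgebra

namespace SynapticAlgebra

variable {R : Type*} [Ring R] [Algebra ℝ R] (S : SynapticAlgebra R)

lemma zero_pos : (0 : R) ∈ S.Pos := by
  simpa using S.pos_smul (le_refl (0:ℝ)) S.one_pos

lemma zero_mem : (0 : R) ∈ S.carrier := by
  simpa using S.smul_mem 0 S.one_mem

lemma sub_mem {a b : R} (ha : a ∈ S.carrier) (hb : b ∈ S.carrier) :
    a - b ∈ S.carrier := by
  simpa [sub_eq_add_neg] using S.add_mem ha (S.neg_mem hb)

lemma proj_pos {p : R} (hp : S.IsProj p) : p ∈ S.Pos := hp.2 ▸ S.SA3 hp.1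

lemma compl_proj {p : R} (hp : S.IsProj p) : S.IsProj (1 - p) := by
  refine ⟨S.sub_mem S.one_mem hp.1, ?_⟩
  have : (1 - p) * (1 - p) = 1 - p - p + p * p := by noncomm_ring
  rw [this, hp.2]; abel

lemma compl_pos {p : R} (hp : S.IsProj p) : (1 : R) - p ∈ S.Pos :=
  S.proj_pos (S.compl_proj hp)

/-- If `pq = qp = p` with `p` a projection and `q` positive, then `p ≤ q`. -/
lemma le_of_mul {p q : R} (hp : S.IsProj p) (hq : q ∈ S.Pos)
    (h1 : p * q = p) (h2 : q * p = p) : S.le p q := by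
  have key : (1 - p) * q * (1 - p) = q - p := by
    have : (1 - p) * q * (1 - p) = q - p * q - q * p + p * q * p := by noncomm_ring
    rw [this, h1, h2, hp.2]; abel
  show q - p ∈ S.Pos
  rw [← key]
  exact S.SA4 (S.compl_pos hp) hq

/-- If `p ≤ q` for projections, then `pq = qp = p`. -/
lemma mul_of_le {p q : R} (hp : S.IsProj p) (hq : S.IsProj q)
    (h : S.le p q) : p * q = p ∧ q * p = p := by
  have hsub : q - p ∈ S.Pos := h
  have e1 : p * (q - p) * p = p * q * p - p := by
    rw [mul_sub, sub_mul, hp.2, hp.2]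
  have e2 : p * (1 - q) * p = p - p * q * p := by
    rw [mul_sub, mul_one, sub_mul, hp.2]
  have h1 : p * q * p - p ∈ S.Pos := e1 ▸ S.SA4 (S.proj_pos hp) hsub
  have h2 : p - p * q * p ∈ S.Pos := e2 ▸ S.SA4 (S.proj_pos hp) (S.compl_pos hq)
  have h3 : p * q * p = p := by
    have := S.pos_antisymm h1 (by simpa using h2)
    have := sub_eq_zero.mp this
    exact this
  have h4 : p * (1 - q) * p = 0 := by rw [e2, h3, sub_self]
  obtain ⟨h5, h6⟩ := S.SA5 hp.1 (S.compl_pos hq) h4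
  constructor
  · have e : p * (1 - q) = p - p * q := by rw [mul_sub, mul_one]
    have h7 : p - p * q = 0 := by rw [← e, h5]
    exact (sub_eq_zero.mp h7).symm
  · have e : (1 - q) * p = p - q * p := by rw [sub_mul, one_mul]
    have h7 : p - q * p = 0 := by rw [← e, h6]
    exact (sub_eq_zero.mp h7).symm

lemma orth_symm {p q : R} (hp : S.IsProj p) (hq : S.IsProj q)
    (h : p * q = 0) : q * p = 0 := by
  have : q * p * q = 0 := by rw [mul_assoc, h, mul_zero]
  exact (S.SA5 hq.1 (S.proj_pos hp) this).1

/-- Part (ii). -/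
lemma orth_iff {p q : R} (hp : S.IsProj p) (hq : S.IsProj q) :
    S.le p (1 - q) ↔ p * q = 0 := by
  constructor
  · intro h
    have h1 := (S.mul_of_le hp (S.compl_proj hq) h).1
    have e : p * (1 - q) = p - p * q := by rw [mul_sub, mul_one]
    have h7 : p - p * q = p := by rw [← e, h1]
    exact sub_eq_self.mp h7
  · intro h
    have h' := S.orth_symm hp hq h
    refine S.le_of_mul hp (S.compl_pos hq) ?_ ?_
    · have : p * (1 - q) = p - p * q := by noncomm_ring
      rw [this, h, sub_zero]
    · have : (1 - q) * p = p - q * p := by noncomm_ring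
      rw [this, h', sub_zero]

/-- Part (i). -/
lemma meet_of_comm {p q : R} (hp : S.IsProj p) (hq : S.IsProj q)
    (hc : p * q = q * p) : S.IsMeet p q (p * q) := by
  have hpq_pos : p * q ∈ S.Pos := S.SA2 (S.proj_pos hp) (S.proj_pos hq) hc
  have hqpq : q * (p * q) = p * q := by rw [← mul_assoc, ← hc, mul_assoc, hq.2]
  have hidem : p * q * (p * q) = p * q := by rw [mul_assoc, hqpq, ← mul_assoc, hp.2]
  have hproj : S.IsProj (p * q) := ⟨S.pos_subset hpq_pos, hidem⟩
  have hpqp : p * q * p = p * q := by rw [hc, mul_assoc, hp.2]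
  refine ⟨hproj, ?_, ?_, ?_⟩
  · -- p*q ≤ p
    show p - p * q ∈ S.Pos
    have e : p * (1 - q) * p = p - p * q := by
      have : p * (1 - q) * p = p * p - p * q * p := by noncomm_ring
      rw [this, hp.2, hpqp]
    rw [← e]; exact S.SA4 (S.proj_pos hp) (S.compl_pos hq)
  · -- p*q ≤ q
    show q - p * q ∈ S.Pos
    have e : q * (1 - p) * q = q - p * q := by
      have : q * (1 - p) * q = q * q - q * p * q := by noncomm_ring
      rw [this, hq.2, ← hc, mul_assoc, hq.2]
    rw [← e]; exact S.SA4 (S.proj_pos hq) (S.compl_pos hp)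
  · intro r hr hrp hrq
    obtain ⟨hrp1, _⟩ := S.mul_of_le hr hp hrp
    obtain ⟨hrq1, hrq2⟩ := S.mul_of_le hr hq hrq
    refine S.le_of_mul hr hpq_pos ?_ ?_
    · rw [← mul_assoc, hrp1, hrq1]
    · rw [hc, mul_assoc, (S.mul_of_le hr hp hrp).2, hrq2]

end SynapticAlgebra

open SynapticAlgebra Filter

variable {R : Type*} [Ring R] [Algebra ℝ R]

/-- Lemma 5.3: (i) commuting projections have infimum `pq`; (ii) `p ⊥ q ↔ pq = 0`;
(iii) orthogonal projections have supremum `p + q`; (iv) if `p ≤ q` then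
`q − p = p^⊥ ∧ q` is a projection; (v) `P` is an orthomodular poset under
`p ↦ 1 − p`. -/
theorem stmt16 (S : SynapticAlgebra R) :
    (∀ p q, S.IsProj p → S.IsProj q → p * q = q * p → S.IsMeet p q (p * q)) ∧
    (∀ p q, S.IsProj p → S.IsProj q → (S.le p (1 - q) ↔ p * q = 0)) ∧
    (∀ p q, S.IsProj p → S.IsProj q → S.le p (1 - q) → S.IsJoin p q (p + q)) ∧
    (∀ p q, S.IsProj p → S.IsProj q → S.le p q →
      (S.IsProj (q - p) ∧ S.IsMeet (1 - p) q (q - p))) ∧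
    ((∀ p, S.IsProj p → S.le 0 p ∧ S.le p 1) ∧
     (∀ p, S.IsProj p → S.IsProj (1 - p) ∧ 1 - (1 - p) = p) ∧
     (∀ p q, S.IsProj p → S.IsProj q → S.le p q → S.le (1 - q) (1 - p)) ∧
     (∀ p, S.IsProj p → S.IsMeet p (1 - p) 0) ∧
     (∀ p q, S.IsProj p → S.IsProj q → S.le p (1 - q) → ∃ j, S.IsJoin p q j) ∧
     (∀ p q, S.IsProj p → S.IsProj q → S.le p q →
       ∃ m, S.IsMeet (1 - p) q m ∧ S.IsJoin p m q)) := by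

  have part3 : ∀ p q, S.IsProj p → S.IsProj q → S.le p (1 - q) → S.IsJoin p q (p + q) := by
    intro p q hp hq h
    have hpq : p * q = 0 := (S.orth_iff hp hq).mp h
    have hqp : q * p = 0 := S.orth_symm hp hq hpq
    have hidem : (p + q) * (p + q) = p + q := by
      have e : (p + q) * (p + q) = p * p + p * q + q * p + q * q := by noncomm_ring
      rw [e, hp.2, hq.2, hpq, hqp]; abel
    have hproj : S.IsProj (p + q) := ⟨S.add_mem hp.1 hq.1, hidem⟩
    refine ⟨hproj, ?_, ?_, ?_⟩
    · show p + q - p ∈ S.Pos; simpa using S.proj_pos hq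
    · show p + q - q ∈ S.Pos; simpa using S.proj_pos hp
    · intro r hr h1 h2
      obtain ⟨h1a, h1b⟩ := S.mul_of_le hp hr h1
      obtain ⟨h2a, h2b⟩ := S.mul_of_le hq hr h2
      refine S.le_of_mul hproj (S.proj_pos hr) ?_ ?_
      · rw [add_mul, h1a, h2a]
      · rw [mul_add, h1b, h2b]
  have part4 : ∀ p q, S.IsProj p → S.IsProj q → S.le p q →
      (S.IsProj (q - p) ∧ S.IsMeet (1 - p) q (q - p)) := by
    intro p q hp hq h
    obtain ⟨hpq, hqp⟩ := S.mul_of_le hp hq h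
    have hidem : (q - p) * (q - p) = q - p := by
      have e : (q - p) * (q - p) = q * q - q * p - p * q + p * p := by noncomm_ring
      rw [e, hq.2, hqp, hpq, hp.2]; abel
    have hproj : S.IsProj (q - p) := ⟨S.sub_mem hq.1 hp.1, hidem⟩
    refine ⟨hproj, hproj, ?_, ?_, ?_⟩
    · show 1 - p - (q - p) ∈ S.Pos
      have e : 1 - p - (q - p) = 1 - q := by abel
      rw [e]; exact S.compl_pos hq
    · show q - (q - p) ∈ S.Pos
      have e : q - (q - p) = p := by abel
      rw [e]; exact S.proj_pos hp
    · intro r hr h1 h2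
      have hrp : r * p = 0 := (S.orth_iff hr hp).mp h1
      have hpr : p * r = 0 := S.orth_symm hr hp hrp
      obtain ⟨hrq, hqr⟩ := S.mul_of_le hr hq h2
      refine S.le_of_mul hr (S.proj_pos hproj) ?_ ?_
      · rw [mul_sub, hrq, hrp, sub_zero]
      · rw [sub_mul, hqr, hpr, sub_zero]
  refine ⟨fun p q hp hq hc => S.meet_of_comm hp hq hc,
          fun p q hp hq => S.orth_iff hp hq, part3, part4, ?_, ?_, ?_, ?_, ?_, ?_⟩
  · intro p hp
    constructor
    · show p - 0 ∈ S.Pos; simpa using S.proj_pos hp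
    · show (1 : R) - p ∈ S.Pos; exact S.compl_pos hp
  · intro p hp
    exact ⟨S.compl_proj hp, by abel⟩
  · intro p q hp hq h
    show 1 - p - (1 - q) ∈ S.Pos
    have e : 1 - p - (1 - q) = q - p := by abel
    rw [e]; exact h
  · intro p hp
    refine ⟨⟨S.zero_mem, by simp⟩, ?_, ?_, ?_⟩
    · show p - 0 ∈ S.Pos; simpa using S.proj_pos hp
    · show 1 - p - 0 ∈ S.Pos; simpa using S.compl_pos hp
    · intro r hr h1 h2
      have hrp0 : r * p = 0 := (S.orth_iff hr hp).mp h2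
      have hrp1 : r * p = r := (S.mul_of_le hr hp h1).1
      have hr0 : r = 0 := by rw [← hrp1, hrp0]
      show (0 : R) - r ∈ S.Pos
      rw [hr0]; simpa using S.zero_pos
  · intro p q hp hq h
    exact ⟨p + q, part3 p q hp hq h⟩
  · intro p q hp hq h
    obtain ⟨hproj, hmeet⟩ := part4 p q hp hq h
    refine ⟨q - p, hmeet, hq, h, ?_, ?_⟩
    · show q - (q - p) ∈ S.Pos
      have e : q - (q - p) = p := by abel
      rw [e]; exact S.proj_pos hp
    · intro r hr h1 h2
      obtain ⟨hpr, hrp⟩ := S.mul_of_le hp hr h1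
      obtain ⟨hqpr, hrqp⟩ := S.mul_of_le hproj hr h2
      refine S.le_of_mul hq (S.proj_pos hr) ?_ ?_
      · have e : q * r = (q - p) * r + p * r := by noncomm_ring
        rw [e, hqpr, hpr]; abel
      · have e : r * q = r * (q - p) + r * p := by noncomm_ring
        rw [e, hrqp, hrp]; abel
end

section
/- If a ∈ A, then a is invertible (i.e., there exists b ∈ A with ab = ba = 1) if and only if there exists ε ∈ ℝ with 0 < ε such that ε·1 ≤ |a|. -/
open SynapticAlgebra Filter

variable {R : Type*} [Ring R] [Algebra ℝ R]

namespace SynapticAlgebra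

variable (S : SynapticAlgebra R)

lemma sq_mem' {a : R} (ha : a ∈ S.carrier) : a * a ∈ S.carrier :=
  S.pos_subset (S.SA3 ha)

lemma mul_mem_of_comm' {a b : R} (ha : a ∈ S.carrier) (hb : b ∈ S.carrier)
    (h : a * b = b * a) : a * b ∈ S.carrier := by
  have expand : (a+b)*(a+b) + (-(a*a)) + (-(b*b)) = (2:ℝ) • (a*b) := by
    have h2 : (a+b)*(a+b) = a*a + a*b + (b*a + b*b) := by
      rw [add_mul, mul_add, mul_add]
    rw [h2, ← h, two_smul]; abel
  have key : a*b = (1/2 : ℝ) • ((a+b)*(a+b) + (-(a*a)) + (-(b*b))) := by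
    rw [expand, smul_smul]; norm_num
  rw [key]
  exact S.smul_mem _ (S.add_mem (S.add_mem (S.sq_mem' (S.add_mem ha hb))
    (S.neg_mem (S.sq_mem' ha))) (S.neg_mem (S.sq_mem' hb)))

lemma sqrt_spec' {x : R} (h : x ∈ S.Pos) :
    S.sqrt x ∈ S.Pos ∧ (∀ c ∈ S.carrier, c * x = x * c → c * S.sqrt x = S.sqrt x * c) ∧
      S.sqrt x * S.sqrt x = x := by
  rw [sqrt, dif_pos h]
  exact Classical.choose_spec (S.SA6 h)

lemma abs_spec' {a : R} (ha : a ∈ S.carrier) :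
    S.abs a ∈ S.Pos ∧ S.abs a * S.abs a = a * a ∧ a * S.abs a = S.abs a * a := by
  have h := S.sqrt_spec' (S.SA3 ha)
  exact ⟨h.1, h.2.2, h.2.1 a ha (mul_assoc a a a).symm⟩

end SynapticAlgebra

/-- Theorem 7.2: `a` is invertible iff there exists `ε > 0` with `ε·1 ≤ |a|`. -/
theorem stmt19 (S : SynapticAlgebra R) {a : R} (ha : a ∈ S.carrier) :
    (∃ b ∈ S.carrier, a * b = 1 ∧ b * a = 1) ↔
      (∃ ε : ℝ, 0 < ε ∧ S.le (S.scal ε) (S.abs a)) := by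
  obtain ⟨htpos, ht2, hta⟩ := S.abs_spec' ha
  set t := S.abs a with htdef
  constructor
  · rintro ⟨b, hb, hab, hba⟩
    have hb2 : b * b ∈ S.Pos := S.SA3 hb
    have hb2c : b * b ∈ S.carrier := S.pos_subset hb2
    have hcomm1 : (b*b) * (a*a) = 1 := by
      rw [mul_assoc, ← mul_assoc b a a, hba, one_mul, hba]
    have hcomm2 : (a*a) * (b*b) = 1 := by
      rw [mul_assoc, ← mul_assoc a b b, hab, one_mul, hab]
    have hbt : (b*b) * t = t * (b*b) :=
      (S.sqrt_spec' (S.SA3 ha)).2.1 (b*b) hb2c (hcomm1.trans hcomm2.symm)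
    have hc : t * (b*b) ∈ S.Pos := S.SA2 htpos hb2 hbt.symm
    obtain ⟨n, hn⟩ := S.orderUnit (S.pos_subset hc)
    have hNc : ((n:ℝ)+1) • (1:R) - t*(b*b) ∈ S.Pos := by
      have h1 := S.pos_add hn S.one_pos
      have e : ((n:ℝ)+1) • (1:R) - t*(b*b) = ((n:ℝ) • (1:R) - t*(b*b)) + 1 := by
        rw [add_smul, one_smul]; abel
      rw [e]; exact h1
    have he : t * (((n:ℝ)+1)•(1:R) - t*(b*b)) = ((n:ℝ)+1) • t - 1 := by
      rw [mul_sub, mul_smul_comm, mul_one, ← mul_assoc, ht2, hcomm2]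
    have hcm : t * (((n:ℝ)+1)•(1:R) - t*(b*b)) = (((n:ℝ)+1)•(1:R) - t*(b*b)) * t := by
      rw [he, sub_mul, smul_mul_assoc, one_mul, ← hbt, mul_assoc, ht2, hcomm1]
    have hNt : ((n:ℝ)+1) • t - 1 ∈ S.Pos := he ▸ S.SA2 htpos hNc hcm
    have hNpos : (0:ℝ) < (n:ℝ)+1 := by positivity
    refine ⟨((n:ℝ)+1)⁻¹, by positivity, ?_⟩
    show t - ((n:ℝ)+1)⁻¹ • (1:R) ∈ S.Pos
    have hsm := S.pos_smul (le_of_lt (inv_pos.mpr hNpos)) hNt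
    rwa [smul_sub, smul_smul, inv_mul_cancel₀ hNpos.ne', one_smul] at hsm
  · rintro ⟨ε, hε, hle⟩
    have hle' : t - ε • (1:R) ∈ S.Pos := hle
    have htc : t ∈ S.carrier := S.pos_subset htpos
    have hd : (ε⁻¹ • t) ∈ S.carrier := S.smul_mem _ htc
    have hd1 : ε⁻¹ • t - 1 ∈ S.Pos := by
      have h1 := S.pos_smul (le_of_lt (inv_pos.mpr hε)) hle'
      rwa [smul_sub, smul_smul, inv_mul_cancel₀ hε.ne', one_smul] at h1
    obtain ⟨c, hc, hdc, hcd⟩ := S.SA8 hd hd1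
    set w := ε⁻¹ • c with hw
    have hwc : w ∈ S.carrier := S.smul_mem _ hc
    have htw : t * w = 1 := by
      rw [hw, mul_smul_comm, ← smul_mul_assoc]; exact hdc
    have hwt : w * t = 1 := by
      rw [hw, smul_mul_assoc, ← mul_smul_comm]; exact hcd
    have haw : a * w = w * a := by
      calc a * w = (w * t) * (a * w) := by rw [hwt, one_mul]
        _ = w * (t * a * w) := by simp only [mul_assoc]
        _ = w * (a * t * w) := by rw [← hta]
        _ = (w * a) * (t * w) := by simp only [mul_assoc]
        _ = w * a := by rw [htw, mul_one]
    have hw2c : w * w ∈ S.carrier := S.sq_mem' hwc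
    have haww : a * (w*w) = (w*w) * a := by
      calc a * (w*w) = (a*w)*w := by rw [mul_assoc]
        _ = (w*a)*w := by rw [haw]
        _ = w*(a*w) := by rw [mul_assoc]
        _ = w*(w*a) := by rw [haw]
        _ = (w*w)*a := by rw [mul_assoc]
    refine ⟨a * (w*w), S.mul_mem_of_comm' ha hw2c haww, ?_, ?_⟩
    · calc a * (a * (w*w)) = (a*a) * (w*w) := by rw [mul_assoc]
        _ = (t*t) * (w*w) := by rw [ht2]
        _ = t * ((t*w)*w) := by rw [mul_assoc, mul_assoc]
        _ = 1 := by rw [htw, one_mul, htw]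
    · calc (a * (w*w)) * a = ((w*w)*a) * a := by rw [haww]
        _ = (w*w) * (a*a) := by rw [mul_assoc]
        _ = (w*w) * (t*t) := by rw [ht2]
        _ = w * ((w*t)*t) := by rw [mul_assoc, mul_assoc]
        _ = 1 := by rw [hwt, one_mul, hwt]
end
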